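/- Suppose |H(n)| ≥ 2 for all n, m₀ < m₁, and Δ₀, Δ₁ ∈ K^H are families all of whose members have domains contained in [m₀, m₁), with HN(Δ₀) < HN(Δ₁). Then there exists a total function f* on [m₀, m₁) with f*(i) ∈ H(i) for all i, such that some g ∈ Δ₀ satisfies g ⊆ f*, while no g ∈ Δ₁ satisfies g ⊆ f*. -/
import Mathlib


def IsPFun (f : Finset (ℕ × ℕ)) : Prop :=
  ∀ p ∈ f, ∀ q ∈ f, p.1 = q.1 → p = q

def pdom (f : Finset (ℕ × ℕ)) : Finset ℕ := f.image Prod.fst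

/-- `Δ ∈ K^H`: a finite nonempty family of finite partial functions with
nonempty domains and values in `H`. -/
def InKH (H : ℕ → Set ℕ) (Δ : Finset (Finset (ℕ × ℕ))) : Prop :=
  Δ.Nonempty ∧ ∀ f ∈ Δ, IsPFun f ∧ f.Nonempty ∧ ∀ p ∈ f, p.2 ∈ H p.1

/-- A `k`-selector for `Δ`. -/
def IsSelector (Δ : Finset (Finset (ℕ × ℕ))) (k : ℕ)
    (F : Finset (ℕ × ℕ) → Finset ℕ) : Prop :=
  (∀ f ∈ Δ, F f ⊆ pdom f ∧ (F f).card = k) ∧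
  ∀ f ∈ Δ, ∀ g ∈ Δ, f ≠ g → Disjoint (F f) (F g)

/-- `hn⁺(Δ) = max {k+1 : there is a k-selector for Δ}`. -/
noncomputable def hnPlus (Δ : Finset (Finset (ℕ × ℕ))) : ℕ :=
  sSup {m | ∃ k F, IsSelector Δ k F ∧ m = k + 1}

def hnProp (Δ : Finset (Finset (ℕ × ℕ))) (k : ℕ) : Prop :=
  ∀ Δ' ⊆ Δ, ∃ Δ'' ⊆ Δ',
    (∀ f ∈ Δ'', ∀ g ∈ Δ'', f ≠ g → Disjoint (pdom f) (pdom g)) ∧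
    k * Δ'.card ≤ (Δ''.biUnion pdom).card

/-- `hn(Δ)`. -/
noncomputable def hn (Δ : Finset (Finset (ℕ × ℕ))) : ℕ :=
  sSup {m | ∃ k, hnProp Δ k ∧ m = k + 1}

/-- `Δ₀ ⪯ Δ₁`. -/
def Prec (Δ₀ Δ₁ : Finset (Finset (ℕ × ℕ))) : Prop :=
  ∀ f ∈ Δ₀, ∃ g ∈ Δ₁, g ⊆ f

/-- `HN(Δ) = max {hn(Δ') : Δ' ∈ K^H, Δ ⪯ Δ'}`. -/
noncomputable def HN (H : ℕ → Set ℕ) (Δ : Finset (Finset (ℕ × ℕ))) : ℕ :=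
  sSup {m | ∃ Δ', InKH H Δ' ∧ Prec Δ Δ' ∧ m = hn Δ'}

/-! ### Auxiliary lemmas -/

lemma isPFun_subset {s t : Finset (ℕ × ℕ)} (hst : s ⊆ t) (ht : IsPFun t) : IsPFun s :=
  fun p hp q hq h => ht p (hst hp) q (hst hq) h

lemma pdom_mono {s t : Finset (ℕ × ℕ)} (hst : s ⊆ t) : pdom s ⊆ pdom t :=
  Finset.image_subset_image hst

lemma mem_pdom {x : ℕ} {f : Finset (ℕ × ℕ)} : x ∈ pdom f ↔ ∃ y, (x, y) ∈ f := by
  constructor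
  · intro hx
    obtain ⟨p, hp, he⟩ := Finset.mem_image.1 hx
    exact ⟨p.2, by rwa [show (x, p.2) = p from Prod.ext he.symm rfl]⟩
  · rintro ⟨y, hy⟩
    exact Finset.mem_image.2 ⟨(x, y), hy, rfl⟩

lemma hnProp_zero (Δ : Finset (Finset (ℕ × ℕ))) : hnProp Δ 0 := by
  intro S _
  exact ⟨∅, Finset.empty_subset _, by simp, by simp⟩

lemma hnProp_le {Δ : Finset (Finset (ℕ × ℕ))} {k : ℕ} {g} (hg : g ∈ Δ) (h : hnProp Δ k) :
    k ≤ (pdom g).card := by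
  obtain ⟨T, hT, -, hcard⟩ := h {g} (Finset.singleton_subset_iff.2 hg)
  have hsub : T.biUnion pdom ⊆ pdom g := by
    intro x hx
    obtain ⟨a, ha, hxa⟩ := Finset.mem_biUnion.1 hx
    have := hT ha
    rw [Finset.mem_singleton] at this
    subst this; exact hxa
  calc k = k * ({g} : Finset (Finset (ℕ × ℕ))).card := by simp
    _ ≤ (T.biUnion pdom).card := hcard
    _ ≤ (pdom g).card := Finset.card_le_card hsub

lemma hn_bddAbove {Δ : Finset (Finset (ℕ × ℕ))} {g} (hg : g ∈ Δ) :
    BddAbove {m | ∃ k, hnProp Δ k ∧ m = k + 1} := by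
  refine ⟨(pdom g).card + 1, ?_⟩
  rintro m ⟨k, hk, rfl⟩
  exact Nat.add_le_add_right (hnProp_le hg hk) 1

lemma one_le_hn {Δ : Finset (Finset (ℕ × ℕ))} {g} (hg : g ∈ Δ) : 1 ≤ hn Δ :=
  le_csSup (hn_bddAbove hg) ⟨0, hnProp_zero Δ, rfl⟩

lemma hn_set_nonempty (Δ : Finset (Finset (ℕ × ℕ))) :
    {m | ∃ k, hnProp Δ k ∧ m = k + 1}.Nonempty :=
  ⟨1, 0, hnProp_zero Δ, rfl⟩

lemma hn_le {Δ : Finset (Finset (ℕ × ℕ))} {g} (hg : g ∈ Δ) : hn Δ ≤ (pdom g).card + 1 := by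
  apply csSup_le (hn_set_nonempty Δ)
  rintro m ⟨k, hk, rfl⟩
  exact Nat.add_le_add_right (hnProp_le hg hk) 1

lemma exists_hnProp_hn {Δ : Finset (Finset (ℕ × ℕ))} {g} (hg : g ∈ Δ) :
    ∃ k, hnProp Δ k ∧ hn Δ = k + 1 :=
  Nat.sSup_mem (hn_set_nonempty Δ) (hn_bddAbove hg)

lemma prec_refl (Δ : Finset (Finset (ℕ × ℕ))) : Prec Δ Δ :=
  fun f hf => ⟨f, hf, Finset.Subset.refl f⟩

lemma HN_bddAbove {H : ℕ → Set ℕ} {Δ : Finset (Finset (ℕ × ℕ))} {g₀} (hg₀ : g₀ ∈ Δ) :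
    BddAbove {m | ∃ Δ', InKH H Δ' ∧ Prec Δ Δ' ∧ m = hn Δ'} := by
  refine ⟨(pdom g₀).card + 1, ?_⟩
  rintro m ⟨Δ', _, hprec, rfl⟩
  obtain ⟨g, hgΔ', hsub⟩ := hprec g₀ hg₀
  exact le_trans (hn_le hgΔ')
    (Nat.add_le_add_right (Finset.card_le_card (pdom_mono hsub)) 1)

/-- Hall-type selector extraction from `hnProp`. -/
lemma exists_selector {Δ' : Finset (Finset (ℕ × ℕ))} {k : ℕ} (h : hnProp Δ' k) :
    ∃ F : {x // x ∈ Δ'} → Finset ℕ,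
      (∀ a, F a ⊆ pdom a.val) ∧ (∀ a, (F a).card = k) ∧
      ∀ a b : {x // x ∈ Δ'}, a ≠ b → Disjoint (F a) (F b) := by
  classical
  have hall : ∀ s : Finset ({x // x ∈ Δ'} × Fin k),
      s.card ≤ (s.biUnion fun z => pdom z.1.val).card := by
    intro s
    set s₁ := s.image Prod.fst with hs₁
    have h1 : s.card ≤ s₁.card * k := by
      have hsub : s ⊆ s₁ ×ˢ (Finset.univ : Finset (Fin k)) := by
        intro z hz
        exact Finset.mem_product.2 ⟨Finset.mem_image_of_mem _ hz, Finset.mem_univ _⟩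
      calc s.card ≤ (s₁ ×ˢ (Finset.univ : Finset (Fin k))).card := Finset.card_le_card hsub
        _ = s₁.card * k := by simp [Finset.card_product]
    set D := s₁.image Subtype.val with hD
    have hDsub : D ⊆ Δ' := by
      intro x hx
      obtain ⟨a, -, rfl⟩ := Finset.mem_image.1 hx
      exact a.2
    obtain ⟨T, hT, -, hcard⟩ := h D hDsub
    have hDcard : D.card = s₁.card := Finset.card_image_of_injective _ Subtype.val_injective
    have h2 : T.biUnion pdom ⊆ s.biUnion fun z => pdom z.1.val := by
      intro x hx
      obtain ⟨a, ha, hxa⟩ := Finset.mem_biUnion.1 hx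
      have haD : a ∈ D := hT ha
      obtain ⟨b, hb, rfl⟩ := Finset.mem_image.1 haD
      obtain ⟨z, hz, rfl⟩ := Finset.mem_image.1 hb
      exact Finset.mem_biUnion.2 ⟨z, hz, hxa⟩
    calc s.card ≤ s₁.card * k := h1
      _ = k * D.card := by rw [hDcard, Nat.mul_comm]
      _ ≤ (T.biUnion pdom).card := hcard
      _ ≤ _ := Finset.card_le_card h2
  obtain ⟨f, hfinj, hfmem⟩ :=
    (Finset.all_card_le_biUnion_card_iff_exists_injective
      (fun z : {x // x ∈ Δ'} × Fin k => pdom z.1.val)).1 hall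
  refine ⟨fun a => (Finset.univ : Finset (Fin k)).image fun i => f (a, i), ?_, ?_, ?_⟩
  · intro a x hx
    obtain ⟨i, -, rfl⟩ := Finset.mem_image.1 hx
    exact hfmem (a, i)
  · intro a
    rw [Finset.card_image_of_injective _ (fun i j hij => by
      have := hfinj hij
      exact (Prod.mk.injEq _ _ _ _ ▸ this).2), Finset.card_univ, Fintype.card_fin]
  · intro a b hab
    rw [Finset.disjoint_left]
    intro x hxa hxb
    obtain ⟨i, -, rfl⟩ := Finset.mem_image.1 hxa
    obtain ⟨j, -, hj⟩ := Finset.mem_image.1 hxb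
    exact hab ((Prod.mk.injEq _ _ _ _ ▸ hfinj hj).1).symm

theorem stmt_8 (H : ℕ → Set ℕ) (hH : ∀ n, (H n).Nontrivial)
    (m₀ m₁ : ℕ) (hm : m₀ < m₁)
    (Δ₀ Δ₁ : Finset (Finset (ℕ × ℕ))) (h₀ : InKH H Δ₀) (h₁ : InKH H Δ₁)
    (hdom₀ : ∀ f ∈ Δ₀, pdom f ⊆ Finset.Ico m₀ m₁)
    (hdom₁ : ∀ f ∈ Δ₁, pdom f ⊆ Finset.Ico m₀ m₁)
    (hHN : HN H Δ₀ < HN H Δ₁) :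
    ∃ fstar : Finset (ℕ × ℕ), IsPFun fstar ∧ pdom fstar = Finset.Ico m₀ m₁ ∧
      (∀ p ∈ fstar, p.2 ∈ H p.1) ∧
      (∃ g ∈ Δ₀, g ⊆ fstar) ∧ (∀ g ∈ Δ₁, ¬ g ⊆ fstar) := by
  classical
  obtain ⟨gg, hgg⟩ := h₀.1
  have hHN0 : 1 ≤ HN H Δ₀ :=
    le_trans (one_le_hn hgg) (le_csSup (HN_bddAbove hgg) ⟨Δ₀, h₀, prec_refl Δ₀, rfl⟩)
  -- witness for HN(Δ₁)
  obtain ⟨g1, hg1⟩ := h₁.1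
  obtain ⟨Δ', hΔ'K, hprec, hHN1⟩ :
      ∃ Δ', InKH H Δ' ∧ Prec Δ₁ Δ' ∧ HN H Δ₁ = hn Δ' := by
    have := Nat.sSup_mem (s := {m | ∃ Δ', InKH H Δ' ∧ Prec Δ₁ Δ' ∧ m = hn Δ'})
      ⟨hn Δ₁, Δ₁, h₁, prec_refl Δ₁, rfl⟩ (HN_bddAbove hg1)
    exact this
  obtain ⟨g', hg'⟩ := hΔ'K.1
  obtain ⟨k, hk, hkk⟩ := exists_hnProp_hn hg'
  have hk1 : 1 ≤ k := by
    have h2 : HN H Δ₁ = k + 1 := by rw [hHN1, hkk]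
    omega
  -- selector
  obtain ⟨Sel, hSelsub, hSelcard, hSeldis⟩ := exists_selector hk
  set filt : {x // x ∈ Δ'} → Finset (ℕ × ℕ) :=
    fun a => a.val.filter (fun p => p.1 ∈ Sel a) with hfilt
  have hfiltsub : ∀ a, filt a ⊆ a.val := fun a => Finset.filter_subset _ _
  have hpdomfilt : ∀ a, pdom (filt a) = Sel a := by
    intro a
    apply Finset.Subset.antisymm
    · intro x hx
      obtain ⟨y, hy⟩ := mem_pdom.1 hx
      exact (Finset.mem_filter.1 hy).2
    · intro x hx
      obtain ⟨y, hy⟩ := mem_pdom.1 (hSelsub a hx)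
      exact mem_pdom.2 ⟨y, Finset.mem_filter.2 ⟨hy, hx⟩⟩
  by_cases hcase : ∀ g₀ ∈ Δ₀, ∃ a : {x // x ∈ Δ'}, filt a ⊆ g₀
  · -- Case A: contradiction with HN(Δ₀) < HN(Δ₁)
    exfalso
    have hchoice : ∀ g : {x // x ∈ Δ₀}, ∃ a, filt a ⊆ g.val := fun g => hcase g.val g.2
    choose FF hFF using hchoice
    set Δs : Finset (Finset (ℕ × ℕ)) := Δ₀.attach.image (fun g => filt (FF g)) with hΔs
    have hmem : ∀ m ∈ Δs, ∃ g : {x // x ∈ Δ₀}, m = filt (FF g) := by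
      intro m hm
      obtain ⟨g, -, rfl⟩ := Finset.mem_image.1 hm
      exact ⟨g, rfl⟩
    have hKs : InKH H Δs := by
      constructor
      · exact ⟨filt (FF ⟨gg, hgg⟩),
          Finset.mem_image.2 ⟨⟨gg, hgg⟩, Finset.mem_attach _ _, rfl⟩⟩
      · intro m hm
        obtain ⟨g, rfl⟩ := hmem m hm
        have hmem' := (FF g).2
        refine ⟨isPFun_subset (hfiltsub _) ((hΔ'K.2 _ hmem').1), ?_, ?_⟩
        · have hpd : (pdom (filt (FF g))).Nonempty := by
            rw [hpdomfilt]
            exact Finset.card_pos.1 (by rw [hSelcard]; omega)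
          obtain ⟨x, hx⟩ := hpd
          obtain ⟨y, hy⟩ := mem_pdom.1 hx
          exact ⟨(x, y), hy⟩
        · intro p hp
          exact (hΔ'K.2 _ hmem').2.2 p (hfiltsub _ hp)
    have hps : Prec Δ₀ Δs := by
      intro g₀ hg₀
      exact ⟨filt (FF ⟨g₀, hg₀⟩),
        Finset.mem_image.2 ⟨⟨g₀, hg₀⟩, Finset.mem_attach _ _, rfl⟩, hFF ⟨g₀, hg₀⟩⟩
    have hdisj : ∀ a ∈ Δs, ∀ b ∈ Δs, a ≠ b → Disjoint (pdom a) (pdom b) := by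
      intro a ha b hb hab
      obtain ⟨g, rfl⟩ := hmem a ha
      obtain ⟨g', rfl⟩ := hmem b hb
      have hne : FF g ≠ FF g' := fun he => hab (by rw [he])
      rw [hpdomfilt, hpdomfilt]
      exact hSeldis _ _ hne
    have hsprop : hnProp Δs k := by
      intro S hS
      refine ⟨S, Finset.Subset.refl S,
        fun a ha b hb hab => hdisj a (hS ha) b (hS hb) hab, ?_⟩
      rw [Finset.card_biUnion (fun a ha b hb hab => hdisj a (hS ha) b (hS hb) hab)]
      have hsum : ∀ a ∈ S, (pdom a).card = k := by
        intro a ha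
        obtain ⟨g, rfl⟩ := hmem a (hS ha)
        rw [hpdomfilt, hSelcard]
      rw [Finset.sum_congr rfl hsum, Finset.sum_const, smul_eq_mul, Nat.mul_comm]
    obtain ⟨m0, hm0⟩ := hKs.1
    have h1 : k + 1 ≤ hn Δs := le_csSup (hn_bddAbove hm0) ⟨k, hsprop, rfl⟩
    have h2 : hn Δs ≤ HN H Δ₀ := le_csSup (HN_bddAbove hgg) ⟨Δs, hKs, hps, rfl⟩
    have h3 : HN H Δ₁ = k + 1 := by rw [hHN1, hkk]
    omega
  · -- Case B: build fstar dodging every member of Δ'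
    push_neg at hcase
    obtain ⟨g₀, hg₀, hbad⟩ := hcase
    have hbadpt : ∀ a : {x // x ∈ Δ'}, ∃ p, p ∈ a.val ∧ p.1 ∈ Sel a ∧ p ∉ g₀ := by
      intro a
      obtain ⟨p, hp, hpn⟩ := Finset.not_subset.1 (hbad a)
      have hp' := Finset.mem_filter.1 hp
      exact ⟨p, hp'.1, hp'.2, hpn⟩
    have hval : ∀ x : ℕ, ∃ v, v ∈ H x ∧
        ∀ a : {y // y ∈ Δ'}, x ∈ Sel a → ∀ y, (x, y) ∈ a.val → v ≠ y := by
      intro x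
      by_cases hx : ∃ a : {y // y ∈ Δ'}, x ∈ Sel a
      · obtain ⟨a₀, ha₀⟩ := hx
        obtain ⟨y₀, hy₀⟩ := mem_pdom.1 (hSelsub a₀ ha₀)
        obtain ⟨u, hu, w, hw, huw⟩ := hH x
        obtain ⟨v, hv, hvne⟩ : ∃ v, v ∈ H x ∧ v ≠ y₀ := by
          rcases eq_or_ne u y₀ with rfl | hne
          · exact ⟨w, hw, fun he => huw he.symm⟩
          · exact ⟨u, hu, hne⟩
        refine ⟨v, hv, ?_⟩
        intro a ha y hy
        have haa : a = a₀ := by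
          by_contra hne
          exact Finset.disjoint_left.1 (hSeldis a a₀ hne) ha ha₀
        subst haa
        have : (x, y) = (x, y₀) := (hΔ'K.2 a.val a.2).1 _ hy _ hy₀ rfl
        have hyy : y = y₀ := by
          injection this
        rwa [hyy]
      · obtain ⟨u, hu, -, -, -⟩ := hH x
        refine ⟨u, hu, ?_⟩
        intro a ha
        exact absurd ⟨a, ha⟩ hx
    choose v hvH hvav using hval
    refine ⟨g₀ ∪ (Finset.Ico m₀ m₁ \ pdom g₀).image (fun x => (x, v x)), ?_, ?_, ?_, ?_, ?_⟩
    · -- IsPFun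
      intro p hp q hq hpq
      rcases Finset.mem_union.1 hp with hp0 | hp1 <;>
        rcases Finset.mem_union.1 hq with hq0 | hq1
      · exact (h₀.2 g₀ hg₀).1 p hp0 q hq0 hpq
      · exfalso
        obtain ⟨x, hx, rfl⟩ := Finset.mem_image.1 hq1
        apply (Finset.mem_sdiff.1 hx).2
        have hpx : p.1 = x := hpq
        rw [← hpx]
        exact Finset.mem_image_of_mem Prod.fst hp0
      · exfalso
        obtain ⟨x, hx, rfl⟩ := Finset.mem_image.1 hp1
        apply (Finset.mem_sdiff.1 hx).2
        have hqx : q.1 = x := hpq.symm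
        rw [← hqx]
        exact Finset.mem_image_of_mem Prod.fst hq0
      · obtain ⟨x, -, rfl⟩ := Finset.mem_image.1 hp1
        obtain ⟨x', -, rfl⟩ := Finset.mem_image.1 hq1
        simp only at hpq
        rw [hpq]
    · -- pdom = Ico
      rw [pdom, Finset.image_union, Finset.image_image]
      rw [show (Prod.fst ∘ fun x => (x, v x)) = id from rfl, Finset.image_id]
      exact Finset.union_sdiff_of_subset (hdom₀ g₀ hg₀)
    · -- values in H
      intro p hp
      rcases Finset.mem_union.1 hp with hp0 | hp1
      · exact (h₀.2 g₀ hg₀).2.2 p hp0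
      · obtain ⟨x, -, rfl⟩ := Finset.mem_image.1 hp1
        exact hvH x
    · exact ⟨g₀, hg₀, Finset.subset_union_left⟩
    · -- no member of Δ₁ below fstar
      intro g₁ hg₁ hsub
      obtain ⟨hh, hhΔ', hhsub⟩ := hprec g₁ hg₁
      obtain ⟨p, hpa, hpsel, hpg₀⟩ := hbadpt ⟨hh, hhΔ'⟩
      have hpf : p ∈ g₀ ∪ (Finset.Ico m₀ m₁ \ pdom g₀).image (fun x => (x, v x)) :=
        hsub (hhsub hpa)
      rcases Finset.mem_union.1 hpf with hp0 | hp1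
      · exact hpg₀ hp0
      · obtain ⟨x, -, he⟩ := Finset.mem_image.1 hp1
        have hx1 : p.1 = x := by rw [← he]
        have hx2 : p.2 = v x := by rw [← he]
        have := hvav x ⟨hh, hhΔ'⟩ (hx1 ▸ hpsel) p.2 (by
          rwa [show (x, p.2) = p from Prod.ext hx1.symm rfl])
        exact this hx2.symm
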